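/- If C is a continuous c-tree on positions 1,…,L, then for every head h the weak order on M_h induced by the head-ordered dependency projection (modifiers attaching at lower nodes of h's spine precede modifiers attaching at higher nodes) satisfies the nesting property: whenever m_i, m_j ∈ M_h satisfy h < m_i < m_j or h > m_i > m_j, the modifier m_i attaches at a node of h's spine that is not higher than the node at which m_j attaches. -/

import Mathlib

/-- A node of a constituent tree: either a pre-terminal over position `i`
(standing for the pre-terminal `(p_i, i, {i})` together with its leaf child `i`),
or a proper node `node Z h cs` with label `Z`, lexical head `h` and children `cs`. -/
inductive CNode (L : ℕ) (Sg : Type) : Type where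
  | pre  : Fin L → CNode L Sg
  | node : Sg → Fin L → List (CNode L Sg) → CNode L Sg

namespace CNode

variable {L : ℕ} {Sg : Type}

/-- The lexical head of a node. -/
def head : CNode L Sg → Fin L
  | pre i => i
  | node _ h _ => h

mutual
  /-- The yield of a node. -/
  def yield : CNode L Sg → Finset (Fin L)
    | pre i => {i}
    | node _ _ cs => yieldList cs
  def yieldList : List (CNode L Sg) → Finset (Fin L)
    | [] => ∅
    | c :: cs => yield c ∪ yieldList cs
end

mutual
  /-- The list of all subtrees (nodes) of a tree, including itself. -/
  def subs : CNode L Sg → List (CNode L Sg)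
    | pre i => [pre i]
    | node Z h cs => node Z h cs :: subsList cs
  def subsList : List (CNode L Sg) → List (CNode L Sg)
    | [] => []
    | c :: cs => subs c ++ subsList cs
end

/-- Well-formedness of a c-tree: children have pairwise disjoint yields and
every proper node has exactly one child whose head is the node's head. -/
inductive Valid : CNode L Sg → Prop where
  | pre (i : Fin L) : Valid (pre i)
  | node (Z : Sg) (h : Fin L) (cs : List (CNode L Sg)) :
      (∀ c ∈ cs, Valid c) →
      cs.Pairwise (fun a b => Disjoint a.yield b.yield) →
      (∃! c, c ∈ cs ∧ head c = h) →
      Valid (node Z h cs)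

/-- A c-tree on positions `1,…,L`: a well-formed tree whose leaves are exactly
the `L` positions, each appearing exactly once. -/
def IsCTree (t : CNode L Sg) : Prop := Valid t ∧ t.yield = Finset.univ

/-- Every proper node has exactly two children. -/
def Binary (t : CNode L Sg) : Prop :=
  ∀ s ∈ t.subs, ∀ Z h cs, s = node Z h cs → cs.length = 2

/-- No proper node has exactly one child. -/
def Unaryless (t : CNode L Sg) : Prop :=
  ∀ s ∈ t.subs, ∀ Z h cs, s = node Z h cs → cs.length ≠ 1

/-- Every node's yield is an interval of consecutive positions. -/
def Continuous (t : CNode L Sg) : Prop :=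
  ∀ s ∈ t.subs, ∃ a b : Fin L, s.yield = Finset.Icc a b

/-- `AttachesAt C h m Z n`: `n` is a proper node of `C` with label `Z` and lexical
head `h`, having a (non-head) child whose lexical head is `m ≠ h`;
i.e. the modifier `m` attaches to `h` at the spine node `n`, generating an arc
`(h, m)` labeled `Z`. -/
def AttachesAt (C : CNode L Sg) (h m : Fin L) (Z : Sg) (n : CNode L Sg) : Prop :=
  n ∈ C.subs ∧ ∃ cs, n = node Z h cs ∧ m ≠ h ∧ ∃ c ∈ cs, head c = m

/-- A proper node with head `h` having at least one non-head child
(i.e. a node of `h`'s spine at which some modifier attaches). -/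
def attachB (h : Fin L) : CNode L Sg → Bool
  | pre _ => false
  | node _ h' cs => h' = h && cs.any (fun c => head c != h)

/-- The position, counted from the bottom of the spine of `h`, of the spine node `n`:
the number of proper nodes with head `h` lying weakly below `n` at which modifiers
attach.  This is the order index (`#1, #2, …`) of the attachment event at `n`. -/
def spineIdx (h : Fin L) (n : CNode L Sg) : ℕ :=
  n.subs.countP (attachB h)

end CNode

/-!
Both `n` and `n'` have lexical head `h`, so `h` lies in both yields; since yields of the nodes of
a c-tree form a laminar family, one node lies below the other. If `n'` lay strictly below `n`,
it would lie inside the head child `c` of `n`, whose yield then contains `h` and `m'`. By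
continuity it contains every position between them, in particular `m`. But `m` heads a
non-head child of `n`, whose yield is disjoint from that of `c`.
-/

namespace CNode

variable {L : ℕ} {Sg : Type}

@[simp]
theorem mem_subs_pre {s : CNode L Sg} {i : Fin L} : s ∈ (pre i).subs ↔ s = pre i := by
  simp [subs]

theorem mem_subsList {s : CNode L Sg} : ∀ {cs : List (CNode L Sg)},
    s ∈ subsList cs ↔ ∃ c ∈ cs, s ∈ c.subs
  | [] => by simp [subsList]
  | c :: cs => by simp [subsList, mem_subsList (cs := cs)]

@[simp]
theorem mem_subs_node {s : CNode L Sg} {Z : Sg} {h : Fin L} {cs : List (CNode L Sg)} :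
    s ∈ (node Z h cs).subs ↔ s = node Z h cs ∨ ∃ c ∈ cs, s ∈ c.subs := by
  rw [subs, List.mem_cons, mem_subsList]

theorem mem_yieldList {x : Fin L} : ∀ {cs : List (CNode L Sg)},
    x ∈ yieldList cs ↔ ∃ c ∈ cs, x ∈ c.yield
  | [] => by simp [yieldList]
  | c :: cs => by simp [yieldList, mem_yieldList (cs := cs)]

@[simp]
theorem mem_yield_node {x : Fin L} {Z : Sg} {h : Fin L} {cs : List (CNode L Sg)} :
    x ∈ (node Z h cs).yield ↔ ∃ c ∈ cs, x ∈ c.yield := by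
  rw [yield, mem_yieldList]

theorem mem_subs_self (t : CNode L Sg) : t ∈ t.subs := by
  cases t <;> simp

theorem mem_subs_of_mem_children {c : CNode L Sg} {Z : Sg} {h : Fin L}
    {cs : List (CNode L Sg)} (hc : c ∈ cs) : c ∈ (node Z h cs).subs :=
  mem_subs_node.2 <| .inr ⟨c, hc, mem_subs_self c⟩

theorem mem_subs_trans : ∀ {u t s : CNode L Sg}, s ∈ t.subs → t ∈ u.subs → s ∈ u.subs
  | pre _, _, _, hst, htu => by rw [mem_subs_pre] at htu; exact htu ▸ hst
  | node _ _ cs, _, _, hst, htu => by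
      obtain rfl | ⟨c, hc, htc⟩ := mem_subs_node.1 htu
      · exact hst
      · have := List.sizeOf_lt_of_mem hc
        exact mem_subs_node.2 <| .inr ⟨c, hc, mem_subs_trans hst htc⟩

theorem yield_subset_of_mem_subs : ∀ {t s : CNode L Sg}, s ∈ t.subs → s.yield ⊆ t.yield
  | pre _, _, hs => by rw [mem_subs_pre] at hs; exact hs ▸ subset_rfl
  | node _ _ cs, _, hs => by
      obtain rfl | ⟨c, hc, hsc⟩ := mem_subs_node.1 hs
      · exact subset_rfl
      · have := List.sizeOf_lt_of_mem hc
        exact fun x hx => mem_yield_node.2 ⟨c, hc, yield_subset_of_mem_subs hsc hx⟩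

namespace Valid

theorem of_mem_subs {t s : CNode L Sg} (ht : Valid t) (hs : s ∈ t.subs) : Valid s := by
  induction ht generalizing s with
  | pre i => rw [mem_subs_pre] at hs; exact hs ▸ .pre i
  | node Z h cs hall hdisj huniq ih =>
      obtain rfl | ⟨c, hc, hsc⟩ := mem_subs_node.1 hs
      · exact .node Z h cs hall hdisj huniq
      · exact ih c hc hsc

theorem of_mem_children {c : CNode L Sg} {Z : Sg} {h : Fin L} {cs : List (CNode L Sg)}
    (hv : Valid (CNode.node Z h cs)) (hc : c ∈ cs) : Valid c :=
  hv.of_mem_subs (mem_subs_of_mem_children hc)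

theorem head_mem_yield {t : CNode L Sg} (ht : Valid t) : t.head ∈ t.yield := by
  induction ht with
  | pre i => simp [head, yield]
  | node Z h cs _ _ huniq ih =>
      obtain ⟨c, ⟨hc, rfl⟩, -⟩ := huniq
      exact mem_yield_node.2 ⟨c, hc, ih c hc⟩

theorem eq_of_mem_yield_of_mem_yield {c c' : CNode L Sg} {Z : Sg} {h x : Fin L}
    {cs : List (CNode L Sg)} (hv : Valid (CNode.node Z h cs)) (hc : c ∈ cs) (hc' : c' ∈ cs)
    (hx : x ∈ c.yield) (hx' : x ∈ c'.yield) : c = c' := by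
  cases hv with
  | node _ _ _ _ hdisj _ =>
      have : Std.Symm fun a b : CNode L Sg => Disjoint a.yield b.yield := ⟨fun _ _ h => h.symm⟩
      by_contra hne
      exact Finset.disjoint_left.1 (hdisj.forall hc hc' hne) hx hx'

theorem head_eq_of_mem_yield {c : CNode L Sg} {Z : Sg} {h : Fin L} {cs : List (CNode L Sg)}
    (hv : Valid (CNode.node Z h cs)) (hc : c ∈ cs) (hh : h ∈ c.yield) : c.head = h := by
  have hv' := hv
  cases hv' with
  | node _ _ _ hall _ huniq =>
      obtain ⟨d, ⟨hd, hdh⟩, -⟩ := huniq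
      have hhd : h ∈ d.yield := hdh ▸ (hall d hd).head_mem_yield
      rwa [hv.eq_of_mem_yield_of_mem_yield hc hd hh hhd]

theorem head_not_mem_yield_of_head_mem_yield {c c' : CNode L Sg} {Z : Sg} {h : Fin L}
    {cs : List (CNode L Sg)} (hv : Valid (CNode.node Z h cs)) (hc : c ∈ cs) (hh : h ∈ c.yield)
    (hc' : c' ∈ cs) (hc'h : c'.head ≠ h) : c'.head ∉ c.yield := fun hmem =>
  hc'h <| hv.eq_of_mem_yield_of_mem_yield hc hc' hmem (hv.of_mem_children hc').head_mem_yield ▸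
    hv.head_eq_of_mem_yield hc hh

theorem mem_subs_or_mem_subs {t s s' : CNode L Sg} (ht : Valid t) (hs : s ∈ t.subs)
    (hs' : s' ∈ t.subs) (hmeet : ¬ Disjoint s.yield s'.yield) : s ∈ s'.subs ∨ s' ∈ s.subs := by
  induction ht with
  | pre i =>
      rw [mem_subs_pre] at hs hs'
      exact .inl (hs ▸ hs' ▸ mem_subs_self _)
  | node Z h cs hall hdisj huniq ih =>
      obtain rfl | ⟨c, hc, hsc⟩ := mem_subs_node.1 hs
      · exact .inr hs'
      obtain rfl | ⟨c', hc', hsc'⟩ := mem_subs_node.1 hs'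
      · exact .inl hs
      obtain ⟨x, hx, hx'⟩ := Finset.not_disjoint_iff.1 hmeet
      obtain rfl : c = c' := (Valid.node Z h cs hall hdisj huniq).eq_of_mem_yield_of_mem_yield
        hc hc' (yield_subset_of_mem_subs hsc hx) (yield_subset_of_mem_subs hsc' hx')
      exact ih c hc hsc hsc'

end Valid

theorem Continuous.ordConnected {C s : CNode L Sg} (hC : Continuous C) (hs : s ∈ C.subs) :
    (s.yield : Set (Fin L)).OrdConnected := by
  obtain ⟨a, b, hab⟩ := hC s hs
  rw [hab, Finset.coe_Icc]
  exact Set.ordConnected_Icc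

end CNode

/-- If `C` is a continuous c-tree, then for every head `h` the weak
order on `M_h` induced by the head-ordered dependency projection satisfies the
nesting property: whenever modifiers `m, m'` of `h` (attaching at spine nodes `n, n'`
of `h` respectively) satisfy `h < m < m'` or `h > m > m'`, the node `n` at which `m`
attaches is not higher than the node `n'` at which `m'` attaches, i.e. `n` lies
(weakly) below `n'` in the tree. -/
theorem stmt5 (L : ℕ) (Sg P : Type) (pos : Fin L → P)
    (C : CNode L Sg) (hC : CNode.IsCTree C) (hcont : CNode.Continuous C)
    (h m m' : Fin L) (Z Z' : Sg) (n n' : CNode L Sg)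
    (hm : CNode.AttachesAt C h m Z n) (hm' : CNode.AttachesAt C h m' Z' n')
    (hord : (h < m ∧ m < m') ∨ (m' < m ∧ m < h)) :
    n ∈ n'.subs := by
  open CNode in
  obtain ⟨hnC, cs, rfl, hmh, cm, hcm, rfl⟩ := hm
  obtain ⟨hn'C, cs', rfl, -, cm', hcm', rfl⟩ := hm'
  have hv := hC.1
  have hvn := hv.of_mem_subs hnC
  have hvn' := hv.of_mem_subs hn'C
  obtain hbelow | habove := hv.mem_subs_or_mem_subs hnC hn'C <|
    Finset.not_disjoint_iff.2 ⟨h, hvn.head_mem_yield, hvn'.head_mem_yield⟩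
  · exact hbelow
  obtain heq | ⟨c, hc, hn'c⟩ := mem_subs_node.1 habove
  · exact heq ▸ mem_subs_self _
  exfalso
  have hn'_sub_c := yield_subset_of_mem_subs hn'c
  have hhc : h ∈ c.yield := hn'_sub_c hvn'.head_mem_yield
  have hm'c : cm'.head ∈ c.yield :=
    hn'_sub_c <| mem_yield_node.2 ⟨cm', hcm', (hvn'.of_mem_children hcm').head_mem_yield⟩
  have hconn := hcont.ordConnected (mem_subs_trans (mem_subs_of_mem_children hc) hnC)
  refine hvn.head_not_mem_yield_of_head_mem_yield hc hhc hcm hmh ?_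
  rcases hord with ⟨hhm, hmm'⟩ | ⟨hm'm, hmh'⟩
  · exact hconn.out hhc hm'c ⟨hhm.le, hmm'.le⟩
  · exact hconn.out hm'c hhc ⟨hm'm.le, hmh'.le⟩
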